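/- arXiv:2511.08001 — 5 statements merged into one kernel-verified Lean document; each statement's English description precedes it below -/
import Mathlib

section
/- Monotonicity of the graph Nash equilibrium (Lemma 1): if a joint trajectory π of length n is a graph Nash equilibrium, then for every n' with 0 ≤ n' ≤ n, the prefix of π restricted to time steps 0, 1, …, n' is itself a graph Nash equilibrium of length n'. -/
/-- The modified joint trajectory `π[i ↦ σ]`, obtained by replacing robot `i`'s
component by `σ` and keeping all other robots' components of `π`. -/
def replaceComp {m : ℕ} {S : Fin m → Type*} {n : ℕ}
    (π : Fin (n + 1) → ∀ j, S j) (i : Fin m) (σ : Fin (n + 1) → S i) :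
    Fin (n + 1) → ∀ j, S j :=
  fun t => Function.update (π t) i (σ t)

/-- `π` is a joint trajectory of length `n`: every step respects each robot's
adjacency relation and every transition is collision-free. -/
def IsTraj {m : ℕ} {S : Fin m → Type*} (Adj : ∀ i, S i → S i → Prop)
    (Free : (∀ j, S j) → (∀ j, S j) → Prop) {n : ℕ}
    (π : Fin (n + 1) → ∀ j, S j) : Prop :=
  (∀ t : Fin n, ∀ i, Adj i (π t.castSucc i) (π t.succ i)) ∧
  ∀ t : Fin n, Free (π t.castSucc) (π t.succ)

/-- Total cost of a length-`n` joint trajectory for the edge stage cost `c`. -/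
def trajCost {m : ℕ} {S : Fin m → Type*}
    (c : (∀ j, S j) → (∀ j, S j) → ℝ) {n : ℕ}
    (π : Fin (n + 1) → ∀ j, S j) : ℝ :=
  ∑ t : Fin n, c (π t.castSucc) (π t.succ)

/-- `σ` is a unilateral deviation of robot `i` in the length-`n` joint
trajectory `π`. -/
def IsDeviation {m : ℕ} {S : Fin m → Type*} (Adj : ∀ i, S i → S i → Prop)
    (Free : (∀ j, S j) → (∀ j, S j) → Prop) {n : ℕ}
    (π : Fin (n + 1) → ∀ j, S j) (i : Fin m) (σ : Fin (n + 1) → S i) : Prop :=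
  σ 0 = π 0 i ∧ σ (Fin.last n) = π (Fin.last n) i ∧
  (∀ t : Fin n, Adj i (σ t.castSucc) (σ t.succ)) ∧
  ∀ t : Fin n, Free (replaceComp π i σ t.castSucc) (replaceComp π i σ t.succ)

/-- `π` is a graph Nash equilibrium: `π` is a joint trajectory, and no robot
can reduce its cost by a unilateral deviation. -/
def IsGNE {m : ℕ} {S : Fin m → Type*} (Adj : ∀ i, S i → S i → Prop)
    (Free : (∀ j, S j) → (∀ j, S j) → Prop)
    (c : ∀ _ : Fin m, (∀ j, S j) → (∀ j, S j) → ℝ) {n : ℕ}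
    (π : Fin (n + 1) → ∀ j, S j) : Prop :=
  IsTraj Adj Free π ∧
  ∀ (i : Fin m) (σ : Fin (n + 1) → S i), IsDeviation Adj Free π i σ →
    trajCost (c i) π ≤ trajCost (c i) (replaceComp π i σ)

/-- **Monotonicity of the graph Nash equilibrium** (Lemma 1): if a joint
trajectory `π` of length `n` is a graph Nash equilibrium, then for every
`n' ≤ n` the prefix of `π` restricted to time steps `0, 1, …, n'` is itself a
graph Nash equilibrium of length `n'`. -/
theorem gNE_monotone {m : ℕ} (hm : 1 ≤ m) {S : Fin m → Type*}
    (Adj : ∀ i, S i → S i → Prop)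
    (Free : (∀ j, S j) → (∀ j, S j) → Prop)
    (c : ∀ _ : Fin m, (∀ j, S j) → (∀ j, S j) → ℝ)
    {n : ℕ} (π : Fin (n + 1) → ∀ j, S j)
    (hNE : IsGNE Adj Free c π)
    (n' : ℕ) (hn' : n' ≤ n) :
    IsGNE Adj Free c
      (fun t : Fin (n' + 1) => π (t.castLE (Nat.succ_le_succ hn'))) := by
  classical
  obtain ⟨⟨hadj, hfree⟩, hopt⟩ := hNE
  set π' : Fin (n' + 1) → ∀ j, S j :=
    fun t : Fin (n' + 1) => π (t.castLE (Nat.succ_le_succ hn')) with hπ'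
  constructor
  · exact ⟨fun t j => hadj ⟨t.val, by omega⟩ j, fun t => hfree ⟨t.val, by omega⟩⟩
  · intro i σ' hdev'
    obtain ⟨hd0, hdl, hdadj, hdfree⟩ := hdev'
    set σ : Fin (n + 1) → S i :=
      fun t => if h : (t : ℕ) < n' + 1 then σ' ⟨t, h⟩ else π t i with hσdef
    have hσlt : ∀ (t : Fin (n + 1)) (h : (t : ℕ) < n' + 1), σ t = σ' ⟨t, h⟩ :=
      fun t h => dif_pos h
    have hσge : ∀ t : Fin (n + 1), n' ≤ (t : ℕ) → σ t = π t i := by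
      intro t ht
      by_cases h : (t : ℕ) < n' + 1
      · have hv : (t : ℕ) = n' := by omega
        have h1 : (⟨(t : ℕ), h⟩ : Fin (n' + 1)) = Fin.last n' := Fin.ext hv
        have h2 : ((Fin.last n').castLE (Nat.succ_le_succ hn')) = t := Fin.ext hv.symm
        rw [hσlt t h, h1, hdl]
        exact congrFun (congrArg π h2) i
      · exact dif_neg h
    have hrge : ∀ t : Fin (n + 1), n' ≤ (t : ℕ) → replaceComp π i σ t = π t := by
      intro t ht
      show Function.update (π t) i (σ t) = π t
      rw [hσge t ht, Function.update_eq_self]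
    have hdev : IsDeviation Adj Free π i σ := by
      refine ⟨?_, ?_, ?_, ?_⟩
      · have h0 : ((0 : Fin (n + 1)) : ℕ) < n' + 1 := by simp
        rw [hσlt 0 h0]
        have e : (⟨((0 : Fin (n + 1)) : ℕ), h0⟩ : Fin (n' + 1)) = 0 := by
          ext; simp
        rw [e, hd0]
        exact congrFun (congrArg π (Fin.ext (by simp))) i
      · exact hσge (Fin.last n) (by simpa using hn')
      · intro t
        by_cases h : (t : ℕ) < n'
        · have hc : ((t.castSucc : Fin (n + 1)) : ℕ) < n' + 1 := by
            simp only [Fin.coe_castSucc]; omega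
          have hs : ((t.succ : Fin (n + 1)) : ℕ) < n' + 1 := by
            simp only [Fin.val_succ]; omega
          rw [hσlt _ hc, hσlt _ hs]
          exact hdadj ⟨t, h⟩
        · have h1 : n' ≤ ((t.castSucc : Fin (n + 1)) : ℕ) := by
            simp only [Fin.coe_castSucc]; omega
          have h2 : n' ≤ ((t.succ : Fin (n + 1)) : ℕ) := by
            simp only [Fin.val_succ]; omega
          rw [hσge _ h1, hσge _ h2]
          exact hadj t i
      · intro t
        by_cases h : (t : ℕ) < n'
        · have hc : ((t.castSucc : Fin (n + 1)) : ℕ) < n' + 1 := by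
            simp only [Fin.coe_castSucc]; omega
          have hs : ((t.succ : Fin (n + 1)) : ℕ) < n' + 1 := by
            simp only [Fin.val_succ]; omega
          have ec : replaceComp π i σ t.castSucc
              = replaceComp π' i σ' (⟨(t : ℕ), h⟩ : Fin n').castSucc := by
            show Function.update (π t.castSucc) i (σ t.castSucc) = _
            rw [hσlt _ hc]; rfl
          have es : replaceComp π i σ t.succ
              = replaceComp π' i σ' (⟨(t : ℕ), h⟩ : Fin n').succ := by
            show Function.update (π t.succ) i (σ t.succ) = _
            rw [hσlt _ hs]; rfl
          rw [ec, es]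
          exact hdfree ⟨(t : ℕ), h⟩
        · have h1 : n' ≤ ((t.castSucc : Fin (n + 1)) : ℕ) := by
            simp only [Fin.coe_castSucc]; omega
          have h2 : n' ≤ ((t.succ : Fin (n + 1)) : ℕ) := by
            simp only [Fin.val_succ]; omega
          rw [hrge _ h1, hrge _ h2]
          exact hfree t
    have hcost := hopt i σ hdev
    set F : ℕ → ℝ := fun k =>
      if h : k < n then c i (π ⟨k, by omega⟩) (π ⟨k + 1, by omega⟩) else 0 with hF
    set G : ℕ → ℝ := fun k =>
      if h : k < n then
        c i (replaceComp π i σ ⟨k, by omega⟩) (replaceComp π i σ ⟨k + 1, by omega⟩)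
      else 0 with hG
    set F' : ℕ → ℝ := fun k =>
      if h : k < n' then c i (π' ⟨k, by omega⟩) (π' ⟨k + 1, by omega⟩) else 0 with hF'
    set G' : ℕ → ℝ := fun k =>
      if h : k < n' then
        c i (replaceComp π' i σ' ⟨k, by omega⟩) (replaceComp π' i σ' ⟨k + 1, by omega⟩)
      else 0 with hG'
    have sF : trajCost (c i) π = ∑ k ∈ Finset.range n, F k := by
      rw [← Fin.sum_univ_eq_sum_range F n]
      refine Finset.sum_congr rfl fun t _ => ?_
      show c i (π t.castSucc) (π t.succ) = F t.val
      simp only [hF]; rw [dif_pos t.isLt]; rfl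
    have sG : trajCost (c i) (replaceComp π i σ) = ∑ k ∈ Finset.range n, G k := by
      rw [← Fin.sum_univ_eq_sum_range G n]
      refine Finset.sum_congr rfl fun t _ => ?_
      show c i (replaceComp π i σ t.castSucc) (replaceComp π i σ t.succ) = G t.val
      simp only [hG]; rw [dif_pos t.isLt]; rfl
    have sF' : trajCost (c i) π' = ∑ k ∈ Finset.range n', F' k := by
      rw [← Fin.sum_univ_eq_sum_range F' n']
      refine Finset.sum_congr rfl fun t _ => ?_
      show c i (π' t.castSucc) (π' t.succ) = F' t.val
      simp only [hF']; rw [dif_pos t.isLt]; rfl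
    have sG' : trajCost (c i) (replaceComp π' i σ') = ∑ k ∈ Finset.range n', G' k := by
      rw [← Fin.sum_univ_eq_sum_range G' n']
      refine Finset.sum_congr rfl fun t _ => ?_
      show c i (replaceComp π' i σ' t.castSucc) (replaceComp π' i σ' t.succ) = G' t.val
      simp only [hG']; rw [dif_pos t.isLt]; rfl
    have hmid : ∀ k ∈ Finset.range n, k ∉ Finset.range n' → G k - F k = 0 := by
      intro k hk hk'
      simp only [Finset.mem_range] at hk hk'
      have hkn' : n' ≤ k := by omega
      simp only [hG, hF]
      rw [dif_pos hk, dif_pos hk,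
        hrge ⟨k, by omega⟩ hkn', hrge ⟨k + 1, by omega⟩ (Nat.le_succ_of_le hkn')]
      ring
    have hterm : ∀ k ∈ Finset.range n', G k - F k = G' k - F' k := by
      intro k hk
      simp only [Finset.mem_range] at hk
      have hkn : k < n := by omega
      simp only [hG, hF, hG', hF']
      rw [dif_pos hkn, dif_pos hkn, dif_pos hk, dif_pos hk]
      have e1 : replaceComp π i σ ⟨k, by omega⟩
          = replaceComp π' i σ' (⟨k, by omega⟩ : Fin (n' + 1)) := by
        show Function.update (π ⟨k, by omega⟩) i (σ ⟨k, by omega⟩) = _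
        rw [hσlt ⟨k, by omega⟩ (Nat.lt_succ_of_lt hk)]; rfl
      have e2 : replaceComp π i σ ⟨k + 1, by omega⟩
          = replaceComp π' i σ' (⟨k + 1, by omega⟩ : Fin (n' + 1)) := by
        show Function.update (π ⟨k + 1, by omega⟩) i (σ ⟨k + 1, by omega⟩) = _
        rw [hσlt ⟨k + 1, by omega⟩ (Nat.succ_lt_succ hk)]; rfl
      rw [e1, e2]
      rfl
    have key : ∑ k ∈ Finset.range n, (G k - F k) = ∑ k ∈ Finset.range n', (G' k - F' k) :=
      (Finset.sum_subset (Finset.range_subset_range.mpr hn') hmid).symm.trans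
        (Finset.sum_congr rfl hterm)
    rw [Finset.sum_sub_distrib, Finset.sum_sub_distrib] at key
    rw [sF, sG] at hcost
    rw [sF', sG']
    linarith
end

section
/- Key concatenation step in the proof of Lemma 1: let π be a joint trajectory of length n, let 0 ≤ n' ≤ n, and suppose σ' is a unilateral deviation of robot i in the length-n' prefix of π with strictly smaller prefix cost, i.e. ∑_{t<n'} c i ((π[i ↦ σ']) t) ((π[i ↦ σ']) (t+1)) < ∑_{t<n'} c i (π t) (π (t+1)). Then the map σ : Fin (n+1) → S i defined by σ t = σ' t for t ≤ n' and σ t = π t i for t > n' is a unilateral deviation of robot i in π (it is well defined since σ' n' = π n' i, respects the adjacency relation Adj i, yields collision-free transitions, and has the same start and terminal states as π's i-th component), and it satisfies J i (π[i ↦ σ]) < J i (π). -/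
section Splice

variable {α : Type*} {n n' : ℕ}

def restrictPrefix (h : n' ≤ n) (ρ : Fin (n + 1) → α) : Fin (n' + 1) → α :=
  fun t => ρ (t.castLE (Nat.succ_le_succ h))

def splice (σ' : Fin (n' + 1) → α) (ρ : Fin (n + 1) → α) : Fin (n + 1) → α :=
  fun t => if h : (t : ℕ) ≤ n' then σ' ⟨t, Nat.lt_succ_of_le h⟩ else ρ t

theorem splice_of_le (σ' : Fin (n' + 1) → α) (ρ : Fin (n + 1) → α) {t : Fin (n + 1)}
    (ht : (t : ℕ) ≤ n') : splice σ' ρ t = σ' ⟨t, Nat.lt_succ_of_le ht⟩ :=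
  dif_pos ht

theorem splice_of_ge {σ' : Fin (n' + 1) → α} {ρ : Fin (n + 1) → α} (h : n' ≤ n)
    (hjoin : σ' (Fin.last n') = restrictPrefix h ρ (Fin.last n')) {t : Fin (n + 1)}
    (ht : n' ≤ (t : ℕ)) : splice σ' ρ t = ρ t := by
  rcases eq_or_lt_of_le ht with heq | hlt
  · have hlast : (⟨t, Nat.lt_succ_of_le heq.ge⟩ : Fin (n' + 1)) = Fin.last n' :=
      Fin.ext heq.symm
    rw [splice_of_le σ' ρ heq.ge, hlast, hjoin]
    exact congrArg ρ (Fin.ext heq)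
  · exact dif_neg (Nat.not_le_of_lt hlt)

theorem restrictPrefix_splice (h : n' ≤ n) (σ' : Fin (n' + 1) → α) (ρ : Fin (n + 1) → α) :
    restrictPrefix h (splice σ' ρ) = σ' :=
  funext fun t => splice_of_le σ' ρ (Nat.le_of_lt_succ t.isLt)

theorem forall_step_of_prefix_of_ge {P : α → α → Prop} (h : n' ≤ n) (ρ : Fin (n + 1) → α)
    (hpre : ∀ t : Fin n', P (restrictPrefix h ρ t.castSucc) (restrictPrefix h ρ t.succ))
    (hsuf : ∀ t : Fin n, n' ≤ (t : ℕ) → P (ρ t.castSucc) (ρ t.succ)) :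
    ∀ t : Fin n, P (ρ t.castSucc) (ρ t.succ) := by
  intro t
  rcases lt_or_ge (t : ℕ) n' with ht | ht
  · exact hpre ⟨t, ht⟩
  · exact hsuf t ht

end Splice

section Trajectories

variable {m : ℕ} {S : Fin m → Type*} {n n' : ℕ}

theorem restrictPrefix_replaceComp (h : n' ≤ n) (π : Fin (n + 1) → ∀ j, S j) (i : Fin m)
    (σ : Fin (n + 1) → S i) :
    restrictPrefix h (replaceComp π i σ) = replaceComp (restrictPrefix h π) i (restrictPrefix h σ) :=
  rfl

theorem replaceComp_apply_of_eq {π : Fin (n + 1) → ∀ j, S j} {i : Fin m}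
    {σ : Fin (n + 1) → S i} {t : Fin (n + 1)} (ht : σ t = π t i) : replaceComp π i σ t = π t :=
  Function.update_eq_self_iff.mpr ht

theorem trajCost_eq_prefix_add (c : (∀ j, S j) → (∀ j, S j) → ℝ) {k : ℕ} (h : n' ≤ n' + k)
    (ρ : Fin (n' + k + 1) → ∀ j, S j) :
    trajCost c ρ = trajCost c (restrictPrefix h ρ) +
      ∑ t : Fin k, c (ρ (Fin.natAdd n' t).castSucc) (ρ (Fin.natAdd n' t).succ) := by
  unfold trajCost
  rw [Fin.sum_univ_add]
  rfl

theorem trajCost_lt_of_prefix_lt (c : (∀ j, S j) → (∀ j, S j) → ℝ) (h : n' ≤ n)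
    {ρ₁ ρ₂ : Fin (n + 1) → ∀ j, S j} (hsuf : ∀ t : Fin (n + 1), n' ≤ (t : ℕ) → ρ₁ t = ρ₂ t)
    (hlt : trajCost c (restrictPrefix h ρ₁) < trajCost c (restrictPrefix h ρ₂)) :
    trajCost c ρ₁ < trajCost c ρ₂ := by
  obtain ⟨k, rfl⟩ := Nat.exists_eq_add_of_le h
  have hstep : ∀ t : Fin k, n' ≤ ((Fin.natAdd n' t).castSucc : ℕ) := fun t =>
    Nat.le_add_right n' t
  rw [trajCost_eq_prefix_add c h ρ₁, trajCost_eq_prefix_add c h ρ₂]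
  have hsuffix : ∀ t : Fin k,
      c (ρ₁ (Fin.natAdd n' t).castSucc) (ρ₁ (Fin.natAdd n' t).succ) =
        c (ρ₂ (Fin.natAdd n' t).castSucc) (ρ₂ (Fin.natAdd n' t).succ) := fun t => by
    rw [hsuf _ (hstep t), hsuf _ (Nat.le_succ_of_le (hstep t))]
  simp only [hsuffix]
  exact add_lt_add_left hlt _

end Trajectories

theorem deviation_concat_general {m : ℕ} {S : Fin m → Type*}
    (Adj : ∀ i, S i → S i → Prop)
    (Free : (∀ j, S j) → (∀ j, S j) → Prop)
    (c : ∀ _ : Fin m, (∀ j, S j) → (∀ j, S j) → ℝ)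
    {n : ℕ} (π : Fin (n + 1) → ∀ j, S j)
    (hπ : IsTraj Adj Free π)
    (n' : ℕ) (hn' : n' ≤ n) (i : Fin m)
    (σ' : Fin (n' + 1) → S i)
    (hdev : IsDeviation Adj Free
      (fun t : Fin (n' + 1) => π (t.castLE (Nat.succ_le_succ hn'))) i σ')
    (hlt : trajCost (c i)
        (replaceComp (fun t : Fin (n' + 1) => π (t.castLE (Nat.succ_le_succ hn'))) i σ')
      < trajCost (c i)
        (fun t : Fin (n' + 1) => π (t.castLE (Nat.succ_le_succ hn')))) :
    IsDeviation Adj Free π i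
      (fun t : Fin (n + 1) =>
        if h : (t : ℕ) ≤ n' then σ' ⟨t, Nat.lt_succ_of_le h⟩ else π t i) ∧
    trajCost (c i)
      (replaceComp π i (fun t : Fin (n + 1) =>
        if h : (t : ℕ) ≤ n' then σ' ⟨t, Nat.lt_succ_of_le h⟩ else π t i))
      < trajCost (c i) π := by
  obtain ⟨hadj, hfree⟩ := hπ
  obtain ⟨hstart, hjoin, hdevAdj, hdevFree⟩ := hdev
  change IsDeviation Adj Free π i (splice σ' fun t => π t i) ∧
    trajCost (c i) (replaceComp π i (splice σ' fun t => π t i)) < trajCost (c i) π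
  have hprefix := restrictPrefix_splice hn' σ' fun t => π t i
  have hsuffix : ∀ t : Fin (n + 1), n' ≤ (t : ℕ) → splice σ' (fun t => π t i) t = π t i :=
    fun t => splice_of_ge hn' hjoin
  have hmodified : ∀ t : Fin (n + 1), n' ≤ (t : ℕ) →
      replaceComp π i (splice σ' fun t => π t i) t = π t :=
    fun t ht => replaceComp_apply_of_eq (hsuffix t ht)
  refine ⟨⟨?_, hsuffix _ hn', ?_, ?_⟩, ?_⟩
  · exact (splice_of_le σ' _ (Nat.zero_le n')).trans hstart
  · refine forall_step_of_prefix_of_ge hn' _ (by rwa [hprefix]) fun t ht => ?_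
    rw [hsuffix _ ht, hsuffix _ (Nat.le_succ_of_le ht)]
    exact hadj t i
  · refine forall_step_of_prefix_of_ge hn' _
      (by rwa [restrictPrefix_replaceComp, hprefix]) fun t ht => ?_
    rw [hmodified _ ht, hmodified _ (Nat.le_succ_of_le ht)]
    exact hfree t
  · exact trajCost_lt_of_prefix_lt (c i) hn' hmodified
      (by rwa [restrictPrefix_replaceComp, hprefix])

/-- **Key concatenation step in the proof of Lemma 1**: if `σ'` is a unilateral
deviation of robot `i` in the length-`n'` prefix of a joint trajectory `π` of
length `n` with strictly smaller prefix cost, then the map `σ` defined by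
`σ t = σ' t` for `t ≤ n'` and `σ t = π t i` for `t > n'` is a unilateral
deviation of robot `i` in `π`, and it satisfies `Jⁱ(π[i ↦ σ]) < Jⁱ(π)`. -/
theorem deviation_concat {m : ℕ} (hm : 1 ≤ m) {S : Fin m → Type*}
    (Adj : ∀ i, S i → S i → Prop)
    (Free : (∀ j, S j) → (∀ j, S j) → Prop)
    (c : ∀ _ : Fin m, (∀ j, S j) → (∀ j, S j) → ℝ)
    {n : ℕ} (π : Fin (n + 1) → ∀ j, S j)
    (hπ : IsTraj Adj Free π)
    (n' : ℕ) (hn' : n' ≤ n) (i : Fin m)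
    (σ' : Fin (n' + 1) → S i)
    (hdev : IsDeviation Adj Free
      (fun t : Fin (n' + 1) => π (t.castLE (Nat.succ_le_succ hn'))) i σ')
    (hlt : trajCost (c i)
        (replaceComp (fun t : Fin (n' + 1) => π (t.castLE (Nat.succ_le_succ hn'))) i σ')
      < trajCost (c i)
        (fun t : Fin (n' + 1) => π (t.castLE (Nat.succ_le_succ hn')))) :
    IsDeviation Adj Free π i
      (fun t : Fin (n + 1) =>
        if h : (t : ℕ) ≤ n' then σ' ⟨t, Nat.lt_succ_of_le h⟩ else π t i) ∧
    trajCost (c i)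
      (replaceComp π i (fun t : Fin (n + 1) =>
        if h : (t : ℕ) ≤ n' then σ' ⟨t, Nat.lt_succ_of_le h⟩ else π t i))
      < trajCost (c i) π :=
  deviation_concat_general Adj Free c π hπ n' hn' i σ' hdev hlt
end

section
/- Soundness of Nash pruning (used in the proof of Theorem 1): if the length-n' prefix of a joint trajectory π of length n (for some 0 ≤ n' ≤ n) is not a graph Nash equilibrium, then π itself is not a graph Nash equilibrium; equivalently, no extension of a pruned (non-gNE) partial joint trajectory can be a graph Nash equilibrium. -/
/-- **Soundness of Nash pruning** (used in the proof of Theorem 1): if the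
length-`n'` prefix of a joint trajectory `π` of length `n` (for some
`0 ≤ n' ≤ n`) is not a graph Nash equilibrium, then `π` itself is not a graph
Nash equilibrium. -/
theorem gNE_pruning_sound {m : ℕ} (hm : 1 ≤ m) {S : Fin m → Type*}
    (Adj : ∀ i, S i → S i → Prop)
    (Free : (∀ j, S j) → (∀ j, S j) → Prop)
    (c : ∀ _ : Fin m, (∀ j, S j) → (∀ j, S j) → ℝ)
    {n : ℕ} (π : Fin (n + 1) → ∀ j, S j)
    (hπ : IsTraj Adj Free π)
    (n' : ℕ) (hn' : n' ≤ n)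
    (hpre : ¬ IsGNE Adj Free c
      (fun t : Fin (n' + 1) => π (t.castLE (Nat.succ_le_succ hn')))) :
    ¬ IsGNE Adj Free c π := by
  intro hGNE
  apply hpre
  set π' : Fin (n' + 1) → ∀ j, S j :=
    fun t : Fin (n' + 1) => π (t.castLE (Nat.succ_le_succ hn')) with hπ'def
  refine ⟨⟨fun t j => ?_, fun t => ?_⟩, ?_⟩
  · exact hπ.1 ⟨t.val, lt_of_lt_of_le t.isLt hn'⟩ j
  · exact hπ.2 ⟨t.val, lt_of_lt_of_le t.isLt hn'⟩
  · intro i σ' hdev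
    -- extend σ' to a deviation σ of π
    set σ : Fin (n + 1) → S i :=
      fun t => if h : t.val ≤ n' then σ' ⟨t.val, Nat.lt_succ_of_le h⟩ else π t i
      with hσdef
    have hB : ∀ (s : Fin (n + 1)) (h : s.val ≤ n'),
        σ s = σ' ⟨s.val, Nat.lt_succ_of_le h⟩ := fun s h => dif_pos h
    have hC : ∀ s : Fin (n + 1), n' ≤ s.val → σ s = π s i := by
      intro s hs
      by_cases h : s.val ≤ n'
      · have hval : s.val = n' := le_antisymm h hs
        rw [hB s h]
        have e1 : (⟨s.val, Nat.lt_succ_of_le h⟩ : Fin (n' + 1)) = Fin.last n' :=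
          Fin.ext hval
        have e2 : ((Fin.last n').castLE (Nat.succ_le_succ hn')) = s :=
          Fin.ext hval.symm
        rw [e1, hdev.2.1, hπ'def]
        simp only [e2]
      · exact dif_neg h
    have hA : ∀ s : Fin (n + 1), n' ≤ s.val → replaceComp π i σ s = π s := by
      intro s hs
      unfold replaceComp
      rw [hC s hs, Function.update_eq_self]
    have hBrep : ∀ (s : Fin (n + 1)) (h : s.val ≤ n'),
        replaceComp π i σ s = replaceComp π' i σ' ⟨s.val, Nat.lt_succ_of_le h⟩ := by
      intro s h
      unfold replaceComp
      rw [hB s h]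
      congr 1
    have hσdev : IsDeviation Adj Free π i σ := by
      refine ⟨?_, ?_, ?_, ?_⟩
      · rw [hB 0 (Nat.zero_le n')]
        have := hdev.1
        rw [hπ'def] at this
        convert this using 2
        all_goals exact Fin.ext rfl
      · exact hC (Fin.last n) hn'
      · intro t
        by_cases ht : t.val < n'
        · have h1 : (t.castSucc : Fin (n + 1)).val ≤ n' := le_of_lt ht
          have h2 : (t.succ : Fin (n + 1)).val ≤ n' := ht
          rw [hB _ h1, hB _ h2]
          have := hdev.2.2.1 ⟨t.val, ht⟩
          convert this using 2 <;> exact Fin.ext rfl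
        · push_neg at ht
          rw [hC _ ht, hC _ (le_trans ht (Nat.le_succ _))]
          exact hπ.1 t i
      · intro t
        by_cases ht : t.val < n'
        · have h1 : (t.castSucc : Fin (n + 1)).val ≤ n' := le_of_lt ht
          have h2 : (t.succ : Fin (n + 1)).val ≤ n' := ht
          rw [hBrep _ h1, hBrep _ h2]
          have := hdev.2.2.2 ⟨t.val, ht⟩
          convert this using 2 <;> exact Fin.ext rfl
        · push_neg at ht
          rw [hA _ ht, hA _ (le_trans ht (Nat.le_succ _))]
          exact hπ.2 t
    have hmain := hGNE.2 i σ hσdev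
    -- relate costs via sums over ranges
    set ρ := replaceComp π i σ with hρ
    set ρ' := replaceComp π' i σ' with hρ'
    have keyπ : ∀ (k : ℕ) (hk1 : k ≤ n'),
        π' ⟨k, Nat.lt_succ_of_le hk1⟩ = π ⟨k, Nat.lt_succ_of_le (le_trans hk1 hn')⟩ := by
      intro k hk1
      rw [hπ'def]
      exact congrArg π (Fin.ext rfl)
    have keyρ : ∀ (k : ℕ) (hk1 : k ≤ n'),
        ρ' ⟨k, Nat.lt_succ_of_le hk1⟩ = ρ ⟨k, Nat.lt_succ_of_le (le_trans hk1 hn')⟩ := by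
      intro k hk1
      exact (hBrep ⟨k, Nat.lt_succ_of_le (le_trans hk1 hn')⟩ hk1).symm
    -- clamped ℕ-indexed versions
    set πN : ℕ → ∀ j, S j := fun k => π ⟨min k n, Nat.lt_succ_of_le (min_le_right _ _)⟩ with hπN
    set ρN : ℕ → ∀ j, S j := fun k => ρ ⟨min k n, Nat.lt_succ_of_le (min_le_right _ _)⟩ with hρN
    set π'N : ℕ → ∀ j, S j := fun k => π' ⟨min k n', Nat.lt_succ_of_le (min_le_right _ _)⟩ with hπ'N
    set ρ'N : ℕ → ∀ j, S j := fun k => ρ' ⟨min k n', Nat.lt_succ_of_le (min_le_right _ _)⟩ with hρ'N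
    have costπ : trajCost (c i) π = ∑ k ∈ Finset.range n, c i (πN k) (πN (k + 1)) := by
      rw [trajCost, ← Fin.sum_univ_eq_sum_range]
      refine Finset.sum_congr rfl fun t _ => ?_
      have ht := t.isLt
      congr 1 <;> exact congrArg π (Fin.ext (by simp only [Fin.coe_castSucc, Fin.val_succ]; omega))
    have costρ : trajCost (c i) ρ = ∑ k ∈ Finset.range n, c i (ρN k) (ρN (k + 1)) := by
      rw [trajCost, ← Fin.sum_univ_eq_sum_range]
      refine Finset.sum_congr rfl fun t _ => ?_
      have ht := t.isLt
      congr 1 <;> exact congrArg ρ (Fin.ext (by simp only [Fin.coe_castSucc, Fin.val_succ]; omega))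
    have costπ' : trajCost (c i) π' = ∑ k ∈ Finset.range n', c i (π'N k) (π'N (k + 1)) := by
      rw [trajCost, ← Fin.sum_univ_eq_sum_range]
      refine Finset.sum_congr rfl fun t _ => ?_
      have ht := t.isLt
      congr 1 <;> exact congrArg π' (Fin.ext (by simp only [Fin.coe_castSucc, Fin.val_succ]; omega))
    have costρ' : trajCost (c i) ρ' = ∑ k ∈ Finset.range n', c i (ρ'N k) (ρ'N (k + 1)) := by
      rw [trajCost, ← Fin.sum_univ_eq_sum_range]
      refine Finset.sum_congr rfl fun t _ => ?_
      have ht := t.isLt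
      congr 1 <;> exact congrArg ρ' (Fin.ext (by simp only [Fin.coe_castSucc, Fin.val_succ]; omega))
    have hρNπN : ∀ k : ℕ, n' ≤ k → ρN k = πN k := by
      intro k hk
      rw [hρN, hπN]
      exact hA _ (by show n' ≤ min k n; omega)
    have hρ'NρN : ∀ k : ℕ, k ≤ n' → ρ'N k = ρN k := by
      intro k hk
      rw [hρ'N, hρN]
      have e1 : min k n' = k := Nat.min_eq_left hk
      have e2 : min k n = k := Nat.min_eq_left (le_trans hk hn')
      simp only [e1, e2]
      exact keyρ k hk
    have hπ'NπN : ∀ k : ℕ, k ≤ n' → π'N k = πN k := by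
      intro k hk
      rw [hπ'N, hπN]
      have e1 : min k n' = k := Nat.min_eq_left hk
      have e2 : min k n = k := Nat.min_eq_left (le_trans hk hn')
      simp only [e1, e2]
      exact keyπ k hk
    have hdiff : trajCost (c i) ρ - trajCost (c i) π
        = trajCost (c i) ρ' - trajCost (c i) π' := by
      rw [costπ, costρ, costπ', costρ', ← Finset.sum_sub_distrib, ← Finset.sum_sub_distrib]
      rw [← Finset.sum_subset (Finset.range_subset_range.mpr hn')]
      · refine Finset.sum_congr rfl fun k hk => ?_
        have hk' : k < n' := Finset.mem_range.mp hk
        rw [hρ'NρN k (le_of_lt hk'), hρ'NρN (k + 1) hk', hπ'NπN k (le_of_lt hk'),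
          hπ'NπN (k + 1) hk']
      · intro k _ hk
        have hk' : n' ≤ k := le_of_not_gt (fun h => hk (Finset.mem_range.mpr h))
        rw [hρNπN k hk', hρNπN (k + 1) (le_trans hk' (Nat.le_succ _)), sub_self]
    have : trajCost (c i) π' - trajCost (c i) ρ' ≤ 0 := by
      have h0 : 0 ≤ trajCost (c i) ρ - trajCost (c i) π := sub_nonneg.mpr hmain
      rw [hdiff] at h0
      linarith
    linarith
end

section
/- Admissibility of the summed heuristic on the tensor-product graph: if for every robot i the heuristic H i is admissible on G i, then the joint heuristic H defined by H x = ∑_i H i (x i) is admissible on the tensor-product graph G, i.e. for every n and every sequence of joint vertices x_0, x_1, …, x_n with a joint edge from x_t to x_{t+1} for all t < n and with x_n a joint goal, ∑_i H i (x_0 i) ≤ ∑_{t<n} W x_t x_{t+1}. -/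
/-- **Admissibility of the summed heuristic on the tensor-product graph**: if
for every robot `i` the heuristic `H i` is admissible on `G i`, then the joint
heuristic `x ↦ ∑ i, H i (x i)` is admissible on the tensor-product graph: for
every path of joint vertices `x 0, x 1, …, x n` (joint edges at every step)
ending at a joint goal, `∑ i, H i (x 0 i) ≤ ∑_{t<n} W (x t) (x (t+1))`. -/
theorem sum_heuristic_admissible {m : ℕ} {V : Fin m → Type*}
    (Adj : ∀ i, V i → V i → Prop)
    (w : ∀ i, V i → V i → ℝ)
    (hw : ∀ i, ∀ u v : V i, 0 ≤ w i u v)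
    (Goal : ∀ i, Set (V i))
    (H : ∀ i, V i → ℝ)
    (hadm : ∀ i, ∀ (n : ℕ) (p : Fin (n + 1) → V i),
      (∀ t : Fin n, Adj i (p t.castSucc) (p t.succ)) →
      p (Fin.last n) ∈ Goal i →
      H i (p 0) ≤ ∑ t : Fin n, w i (p t.castSucc) (p t.succ)) :
    ∀ (n : ℕ) (x : Fin (n + 1) → ∀ i, V i),
      (∀ t : Fin n, ∀ i, Adj i (x t.castSucc i) (x t.succ i)) →
      (∀ i, x (Fin.last n) i ∈ Goal i) →
      ∑ i, H i (x 0 i) ≤ ∑ t : Fin n, ∑ i, w i (x t.castSucc i) (x t.succ i) := by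
  intro n x hadj hgoal
  rw [Finset.sum_comm]
  exact Finset.sum_le_sum fun i _ =>
    hadm i n (fun t => x t i) (fun t => hadj t i) (hgoal i)
end

section
/- The proximity stage cost is Lipschitz: the function f defined by f p = λ / max (min_{j} ‖p − q j‖) ε is Lipschitz continuous on ℝ² with Lipschitz constant λ / ε². -/
/-- The proximity stage cost
`f p = λ / max (min_{j ∈ Fin k} ‖p − q j‖) ε`. -/
noncomputable def proxCost (lam eps : ℝ) {k : ℕ} (hk : 1 ≤ k)
    (q : Fin k → EuclideanSpace ℝ (Fin 2))
    (p : EuclideanSpace ℝ (Fin 2)) : ℝ :=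
  lam / max
    (Finset.univ.inf' (Finset.univ_nonempty_iff.mpr ⟨⟨0, hk⟩⟩)
      fun j => ‖p - q j‖) eps

/-- The proximity stage cost is Lipschitz continuous on `ℝ²` with Lipschitz
constant `λ / ε²`. -/
theorem proxCost_lipschitz (lam eps : ℝ) (hlam : 0 ≤ lam) (heps : 0 < eps)
    {k : ℕ} (hk : 1 ≤ k) (q : Fin k → EuclideanSpace ℝ (Fin 2)) :
    LipschitzWith (Real.toNNReal (lam / eps ^ 2)) (proxCost lam eps hk q) := by
  have hne : (Finset.univ : Finset (Fin k)).Nonempty :=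
    Finset.univ_nonempty_iff.mpr ⟨⟨0, hk⟩⟩
  set m : EuclideanSpace ℝ (Fin 2) → ℝ := fun p =>
    Finset.univ.inf' hne fun j => ‖p - q j‖ with hm
  set g : EuclideanSpace ℝ (Fin 2) → ℝ := fun p => max (m p) eps with hg
  -- m is 1-Lipschitz (directly)
  have hmlip : ∀ a b, m a ≤ m b + dist a b := by
    intro a b
    obtain ⟨j, -, hj⟩ := Finset.exists_mem_eq_inf' hne fun j => ‖b - q j‖
    have h1 : m a ≤ ‖a - q j‖ := Finset.inf'_le _ (Finset.mem_univ j)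
    have h2 : ‖a - q j‖ ≤ ‖b - q j‖ + dist a b := by
      have := norm_sub_norm_le (a - q j) (b - q j)
      have heq : a - q j - (b - q j) = a - b := by abel
      rw [heq] at this
      have : ‖a - q j‖ - ‖b - q j‖ ≤ dist a b := by
        simpa [dist_eq_norm] using le_trans this (le_abs_self _)
      linarith
    calc m a ≤ ‖b - q j‖ + dist a b := le_trans h1 h2
      _ = m b + dist a b := by simp only [hm]; rw [hj]
  have hmabs : ∀ a b, |m a - m b| ≤ dist a b := by
    intro a b
    rw [abs_sub_le_iff]
    constructor
    · linarith [hmlip a b]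
    · linarith [hmlip b a, dist_comm a b]
  have hgabs : ∀ a b, |g a - g b| ≤ dist a b :=
    fun a b => le_trans (abs_max_sub_max_le_abs _ _ _) (hmabs a b)
  have hgpos : ∀ a, eps ≤ g a := fun a => le_max_right _ _
  rw [lipschitzWith_iff_dist_le_mul]
  intro a b
  have hga : 0 < g a := lt_of_lt_of_le heps (hgpos a)
  have hgb : 0 < g b := lt_of_lt_of_le heps (hgpos b)
  have hcoe : (Real.toNNReal (lam / eps ^ 2) : ℝ) = lam / eps ^ 2 :=
    Real.coe_toNNReal _ (div_nonneg hlam (le_of_lt (pow_pos heps 2)))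
  rw [hcoe]
  have hfa : proxCost lam eps hk q a = lam / g a := rfl
  have hfb : proxCost lam eps hk q b = lam / g b := rfl
  rw [hfa, hfb, Real.dist_eq]
  have key : lam / g a - lam / g b = lam * (g b - g a) / (g a * g b) := by
    field_simp
  rw [key, abs_div, abs_mul]
  rw [abs_of_nonneg hlam, abs_of_pos (mul_pos hga hgb)]
  have h1 : |g b - g a| ≤ dist a b := by
    rw [abs_sub_comm]; exact hgabs a b
  have h2 : eps ^ 2 ≤ g a * g b := by
    rw [sq]
    exact mul_le_mul (hgpos a) (hgpos b) (le_of_lt heps) (le_of_lt hga)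
  calc lam * |g b - g a| / (g a * g b)
      ≤ lam * dist a b / eps ^ 2 := by
        gcongr
    _ = lam / eps ^ 2 * dist a b := by ring
end
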